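/- arXiv:1304.6356 — 2 statements merged into one kernel-verified Lean document; each statement's English description precedes it below -/
import Mathlib

section
/- On the set where H > 0 on a self-shrinker Σ, the tensor τ = A/H satisfies L_{H²} τ = 0, where L_{H²} u = 𝓛u + ⟨∇ log H², ∇u⟩ and 𝓛 = Δ − (1/2)∇_{x^T}. -/
open RealInnerProductSpace

/-- On the set where `H > 0` on a self-shrinker `Σ`, the tensor
`τ = A/H` satisfies `L_{H²} τ = 0`, where `L_{H²} u = 𝓛u + ⟨∇ log H², ∇u⟩` and
`𝓛 = Δ − (1/2)∇_{x^T}`.  Abstract setting: `P` is the set of (smooth) points of `Σ`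
where `H > 0`, `grad`/`lap` are the intrinsic gradient and Laplacian with their Leibniz
rules, `X = x^T`, `A` is (a component of) the second fundamental form, `H` the mean
curvature, and `Asq = |A|²`.  The Colding–Minicozzi identities `L H = H` and `L A = A`
with `L = 𝓛 + |A|² + 1/2` are the hypotheses `hLH`, `hLA`.  Since `∇ log H² = (2/H)∇H`,
the conclusion reads `𝓛(A/H) + ⟨(2/H)∇H, ∇(A/H)⟩ = 0`. -/
theorem stmt_4 {P V : Type*} [NormedAddCommGroup V] [InnerProductSpace ℝ V]
    (grad : (P → ℝ) → (P → V)) (lap : (P → ℝ) → (P → ℝ)) (X : P → V)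
    (hgrad : ∀ u v : P → ℝ,
      grad (u * v) = fun p => u p • grad v p + v p • grad u p)
    (hlap : ∀ u v : P → ℝ,
      lap (u * v) = fun p => u p * lap v p + v p * lap u p
        + 2 * ⟪grad u p, grad v p⟫)
    (Ldrift : (P → ℝ) → (P → ℝ))
    (hL : ∀ u : P → ℝ, Ldrift u = fun p => lap u p - (1 / 2) * ⟪X p, grad u p⟫)
    (A H Asq : P → ℝ) (hH : ∀ p, 0 < H p)
    (hLH : ∀ p, Ldrift H p + (Asq p + 1 / 2) * H p = H p)
    (hLA : ∀ p, Ldrift A p + (Asq p + 1 / 2) * A p = A p) :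
    ∀ p, Ldrift (A / H) p + ⟪(2 / H p) • grad H p, grad (A / H) p⟫ = 0 := by
  intro p
  have hne : H p ≠ 0 := (hH p).ne'
  set f : P → ℝ := A / H with hf
  have hA : A = H * f := by
    funext q
    simp only [hf, Pi.mul_apply, Pi.div_apply]
    rw [mul_div_cancel₀ _ (hH q).ne']
  have h1 := hLA p
  rw [hA, hL, hlap, hgrad] at h1
  have h2 := hLH p
  rw [hL] at h2
  rw [hL]
  simp only [Pi.mul_apply, Pi.div_apply, inner_add_right, real_inner_smul_right,
    real_inner_smul_left] at h1 h2 ⊢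
  have key : H p * lap f p - (1 / 2) * (H p * ⟪X p, grad f p⟫)
      + 2 * ⟪grad H p, grad f p⟫ = 0 := by
    have h2' : f p * lap H p - (1 / 2) * (f p * ⟪X p, grad H p⟫)
        + (Asq p + 1 / 2) * (f p * H p) = f p * H p := by
      have := congrArg (fun x => f p * x) h2
      ring_nf at this ⊢
      linarith [this]
    nlinarith [h1, h2']
  have : lap f p - 1 / 2 * ⟪X p, grad f p⟫ + 2 / H p * ⟪grad H p, grad f p⟫ = 0 := by
    have := congrArg (fun x => x / H p) key
    field_simp at this ⊢
    linarith [this]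
  linarith [this]
end

section
/- Let B be a symmetric 2-tensor on a Riemannian manifold with |∇B| ≤ ε and |∇²B| ≤ ε, ε ≤ 1. Suppose at a point p there are unit tangent vectors e₁, e₂ with B(e₁) = 0 and B(e₂) = κ e₂, κ ≠ 0. Then the sectional curvature K of the 2-plane spanned by e₁ and e₂ satisfies |K| ≤ 2ε(1/|κ| + 1/κ²). -/
open RealInnerProductSpace

/-- **almost-parallel symmetric 2-tensors.** Let `B` be a symmetric
2-tensor on a Riemannian manifold with `|∇B| ≤ ε` and `|∇²B| ≤ ε`, `ε ≤ 1`.  If at a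
point `p` there are unit tangent vectors `e₁, e₂` with `B_p(e₁) = 0` and
`B_p(e₂) = κ e₂`, `κ ≠ 0`, then the sectional curvature `K` of the plane spanned by
`e₁, e₂` satisfies `|K| ≤ 2ε(1/|κ| + 1/κ²)`.

Abstract encoding (Mathlib has no Riemannian curvature): `P` is the set of points of
(a parallelizable patch of) the manifold, vector fields are maps `P → V`, `D X Y = ∇_X Y`
is the Levi-Civita connection (additive, tensorial in `X`, Leibniz in `Y` via the
directional derivative `dd` of functions, metric-compatible), and the Lie bracket is
`[X,Y] = ∇_X Y − ∇_Y X` (torsion-freeness).  The tensor `B` is viewed via the metric as a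
symmetric endomorphism field; its covariant derivatives are
`(∇_X B)(Y) = ∇_X(B(Y)) − B(∇_X Y)` and
`(∇²_{X,Y}B)(Z) = ∇_X((∇B)(Y,Z)) − (∇B)(∇_X Y, Z) − (∇B)(Y, ∇_X Z)`, with the pointwise
(tensorial) bounds `hDB_bd`, `hD2B_bd`.  `hext` provides extensions of unit vectors at
`p` to fields with vanishing covariant derivative at `p` and norm at most one (normal
coordinates).  `hK` says `K = ⟨R(e₂,e₁)e₂, e₁⟩` computed, as in the paper, from any
extensions `v₁, v₂` of `e₁, e₂` as above, with `w₂ = B(v₂)/κ`. -/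
theorem stmt_8 {P V : Type*} [NormedAddCommGroup V] [InnerProductSpace ℝ V]
    (ε κ K : ℝ) (hε0 : 0 ≤ ε) (hε : ε ≤ 1) (hκ : κ ≠ 0)
    (D : (P → V) → (P → V) → (P → V))
    (dd : (P → ℝ) → (P → V) → (P → ℝ))
    (hD_addR : ∀ X Y Z, D X (Y + Z) = D X Y + D X Z)
    (hD_addL : ∀ X Y Z, D (X + Y) Z = D X Z + D Y Z)
    (hD_tens : ∀ (f : P → ℝ) X Y, D (fun p => f p • X p) Y = fun p => f p • D X Y p)
    (hD_leib : ∀ (f : P → ℝ) X Y,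
      D X (fun p => f p • Y p) = fun p => dd f X p • Y p + f p • D X Y p)
    (hmetric : ∀ X Y Z, dd (fun p => ⟪Y p, Z p⟫) X
      = fun p => ⟪D X Y p, Z p⟫ + ⟪Y p, D X Z p⟫)
    (B : P → V →ₗ[ℝ] V)
    (hBsym : ∀ p y z, ⟪B p y, z⟫ = ⟪y, B p z⟫)
    (DB : (P → V) → (P → V) → (P → V))
    (hDB_def : ∀ X Y, DB X Y = fun p => D X (fun q => B q (Y q)) p - B p (D X Y p))
    (D2B : (P → V) → (P → V) → (P → V) → (P → V))
    (hD2B_def : ∀ X Y Z, D2B X Y Z = D X (DB Y Z) - DB (D X Y) Z - DB Y (D X Z))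
    (hDB_bd : ∀ X Y p, ‖DB X Y p‖ ≤ ε * ‖X p‖ * ‖Y p‖)
    (hD2B_bd : ∀ X Y Z p, ‖D2B X Y Z p‖ ≤ ε * ‖X p‖ * ‖Y p‖ * ‖Z p‖)
    (p : P) (e₁ e₂ : V) (he₁ : ‖e₁‖ = 1) (he₂ : ‖e₂‖ = 1)
    (hBe₁ : B p e₁ = 0) (hBe₂ : B p e₂ = κ • e₂)
    (hext : ∀ e : V, ‖e‖ = 1 →
      ∃ X : P → V, X p = e ∧ (∀ Y, D Y X p = 0) ∧ ∀ q, ‖X q‖ ≤ 1)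
    (hK : ∀ v₁ v₂ : P → V, v₁ p = e₁ → v₂ p = e₂ →
      (∀ Y, D Y v₁ p = 0) → (∀ Y, D Y v₂ p = 0) →
      (∀ q, ‖v₁ q‖ ≤ 1) → (∀ q, ‖v₂ q‖ ≤ 1) →
      ∀ w₂ : P → V, w₂ = (fun q => κ⁻¹ • B q (v₂ q)) →
        K = ⟪D v₁ (D w₂ w₂) p - D w₂ (D v₁ w₂) p
              - D (D v₁ w₂ - D w₂ v₁) w₂ p, e₁⟫) :
    |K| ≤ 2 * ε * (1 / |κ| + 1 / κ ^ 2) := by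
  classical
  obtain ⟨v₁, hv₁p, hv₁D, hv₁n⟩ := hext e₁ he₁
  obtain ⟨v₂, hv₂p, hv₂D, hv₂n⟩ := hext e₂ he₂
  set w₂ : P → V := fun q => κ⁻¹ • B q (v₂ q) with hw₂def
  have hKeq := hK v₁ v₂ hv₁p hv₂p hv₁D hv₂D hv₁n hv₂n w₂ hw₂def
  -- basic point facts
  have hBperp : ∀ v : V, ⟪B p v, e₁⟫ = 0 := by
    intro v; rw [hBsym p v e₁, hBe₁, inner_zero_right]
  have he12 : ⟪e₂, e₁⟫ = 0 := by
    have h := hBperp e₂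
    rw [hBe₂, real_inner_smul_left] at h
    exact (mul_eq_zero.mp h).resolve_left hκ
  have hw₂p : w₂ p = e₂ := by
    have h : w₂ p = κ⁻¹ • B p (v₂ p) := rfl
    rw [h, hv₂p, hBe₂, smul_smul, inv_mul_cancel₀ hκ, one_smul]
  -- zero lemmas for DB
  have hzR : ∀ X Y : P → V, Y p = 0 → DB X Y p = 0 := by
    intro X Y h
    have hb := hDB_bd X Y p
    rw [h, norm_zero, mul_zero] at hb
    exact norm_le_zero_iff.mp hb
  have hzL : ∀ X Y : P → V, X p = 0 → DB X Y p = 0 := by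
    intro X Y h
    have hb := hDB_bd X Y p
    rw [h, norm_zero, mul_zero, zero_mul] at hb
    exact norm_le_zero_iff.mp hb
  -- expansion of D X (B ∘ Y)
  have hDexp : ∀ (X Y : P → V) (q : P),
      D X (fun r => B r (Y r)) q = DB X Y q + B q (D X Y q) := by
    intro X Y q
    rw [show DB X Y q = D X (fun r => B r (Y r)) q - B q (D X Y q)
        from congrFun (hDB_def X Y) q]
    abel
  have hDFp : ∀ X : P → V, D X (fun r => B r (v₂ r)) p = DB X v₂ p := by
    intro X
    rw [hDexp X v₂ p, hv₂D X, map_zero, add_zero]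
  -- D X w₂ as a field
  have hDw₂f : ∀ X : P → V, D X w₂ =
      fun q => dd (fun _ => κ⁻¹) X q • B q (v₂ q)
        + κ⁻¹ • D X (fun r => B r (v₂ r)) q := by
    intro X
    rw [hw₂def]
    exact hD_leib (fun _ => κ⁻¹) X (fun r => B r (v₂ r))
  have hDw₂p : ∀ X : P → V, D X w₂ p
      = dd (fun _ => κ⁻¹) X p • (κ • e₂) + κ⁻¹ • DB X v₂ p := by
    intro X
    rw [show D X w₂ p = dd (fun _ => κ⁻¹) X p • B p (v₂ p)
          + κ⁻¹ • D X (fun r => B r (v₂ r)) p from congrFun (hDw₂f X) p,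
        hv₂p, hBe₂, hDFp]
  have hiDw₂ : ∀ X : P → V, ⟪D X w₂ p, e₁⟫ = κ⁻¹ * ⟪DB X v₂ p, e₁⟫ := by
    intro X
    rw [hDw₂p X, inner_add_left, real_inner_smul_left, real_inner_smul_left,
      real_inner_smul_left, he12]
    ring
  -- DB linearity in the first slot
  have hDBsmul : ∀ (f : P → ℝ) (X Y : P → V) (q : P),
      DB (fun r => f r • X r) Y q = f q • DB X Y q := by
    intro f X Y q
    rw [show DB (fun r => f r • X r) Y q
          = D (fun r => f r • X r) (fun r => B r (Y r)) q
            - B q (D (fun r => f r • X r) Y q) from congrFun (hDB_def _ Y) q,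
        show DB X Y q = D X (fun r => B r (Y r)) q - B q (D X Y q)
          from congrFun (hDB_def X Y) q,
        show D (fun r => f r • X r) (fun r => B r (Y r)) q
          = f q • D X (fun r => B r (Y r)) q from congrFun (hD_tens f X _) q,
        show D (fun r => f r • X r) Y q = f q • D X Y q
          from congrFun (hD_tens f X Y) q,
        map_smul, smul_sub]
  have hDBadd : ∀ (X X' Y : P → V) (q : P),
      DB (X + X') Y q = DB X Y q + DB X' Y q := by
    intro X X' Y q
    rw [show DB (X + X') Y q
          = D (X + X') (fun r => B r (Y r)) q - B q (D (X + X') Y q)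
          from congrFun (hDB_def _ Y) q,
        show D (X + X') (fun r => B r (Y r)) q
          = D X (fun r => B r (Y r)) q + D X' (fun r => B r (Y r)) q
          from congrFun (hD_addL X X' _) q,
        show D (X + X') Y q = D X Y q + D X' Y q from congrFun (hD_addL X X' Y) q,
        show DB X Y q = D X (fun r => B r (Y r)) q - B q (D X Y q)
          from congrFun (hDB_def X Y) q,
        show DB X' Y q = D X' (fun r => B r (Y r)) q - B q (D X' Y q)
          from congrFun (hDB_def X' Y) q,
        map_add]
    abel
  -- decomposition of the field D X w₂
  have Edec : ∀ X : P → V, D X w₂ =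
      (fun q => dd (fun _ => κ⁻¹) X q • B q (v₂ q)) +
      ((fun q => κ⁻¹ • DB X v₂ q) + (fun q => κ⁻¹ • B q (D X v₂ q))) := by
    intro X
    funext q
    simp only [Pi.add_apply]
    rw [show D X w₂ q = dd (fun _ => κ⁻¹) X q • B q (v₂ q)
          + κ⁻¹ • D X (fun r => B r (v₂ r)) q from congrFun (hDw₂f X) q,
        hDexp X v₂ q, smul_add]
  have hD_subL : ∀ X Y Z : P → V, D (X - Y) Z = D X Z - D Y Z := by
    intro X Y Z
    have h : D (X - Y + Y) Z = D (X - Y) Z + D Y Z := hD_addL (X - Y) Y Z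
    rw [sub_add_cancel] at h
    rw [h]; abel
  -- Term A
  have hA : ⟪D v₁ (D w₂ w₂) p, e₁⟫ =
      dd (fun _ => κ⁻¹) w₂ p * ⟪DB v₁ v₂ p, e₁⟫
      + (dd (fun _ => κ⁻¹) v₁ p * ⟪DB w₂ v₂ p, e₁⟫
         + κ⁻¹ * (⟪D2B v₁ w₂ v₂ p, e₁⟫
            + (dd (fun _ => κ⁻¹) v₁ p * ⟪DB (fun r => B r (v₂ r)) v₂ p, e₁⟫
               + κ⁻¹ * ⟪DB (DB v₁ v₂) v₂ p, e₁⟫))) := by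
    have hDv₁DB : D v₁ (DB w₂ v₂) p
        = D2B v₁ w₂ v₂ p + (DB (D v₁ w₂) v₂ p + DB w₂ (D v₁ v₂) p) := by
      have h := congrFun (hD2B_def v₁ w₂ v₂) p
      simp only [Pi.sub_apply] at h
      rw [h]; abel
    have hDBDv₁w₂ : DB (D v₁ w₂) v₂ p
        = dd (fun _ => κ⁻¹) v₁ p • DB (fun r => B r (v₂ r)) v₂ p
          + κ⁻¹ • DB (DB v₁ v₂) v₂ p := by
      rw [Edec v₁, hDBadd, hDBadd,
          hDBsmul (dd (fun _ => κ⁻¹) v₁) (fun r => B r (v₂ r)) v₂ p,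
          hDBsmul (fun _ => κ⁻¹) (DB v₁ v₂) v₂ p,
          hzL (fun q => κ⁻¹ • B q (D v₁ v₂ q)) v₂ (by simp [hv₂D v₁]),
          add_zero]
    rw [Edec w₂, hD_addR, hD_addR]
    simp only [Pi.add_apply, inner_add_left]
    have h₁ : ⟪D v₁ (fun q => dd (fun _ => κ⁻¹) w₂ q • B q (v₂ q)) p, e₁⟫
        = dd (fun _ => κ⁻¹) w₂ p * ⟪DB v₁ v₂ p, e₁⟫ := by
      rw [show D v₁ (fun q => dd (fun _ => κ⁻¹) w₂ q • B q (v₂ q)) p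
            = dd (dd (fun _ => κ⁻¹) w₂) v₁ p • B p (v₂ p)
              + dd (fun _ => κ⁻¹) w₂ p • D v₁ (fun r => B r (v₂ r)) p
          from congrFun (hD_leib (dd (fun _ => κ⁻¹) w₂) v₁ (fun r => B r (v₂ r))) p,
          hv₂p, hBe₂, hDFp v₁]
      simp [inner_add_left, real_inner_smul_left, he12]
    have h₂ : ⟪D v₁ (fun q => κ⁻¹ • DB w₂ v₂ q) p, e₁⟫
        = dd (fun _ => κ⁻¹) v₁ p * ⟪DB w₂ v₂ p, e₁⟫
          + κ⁻¹ * (⟪D2B v₁ w₂ v₂ p, e₁⟫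
            + (dd (fun _ => κ⁻¹) v₁ p * ⟪DB (fun r => B r (v₂ r)) v₂ p, e₁⟫
               + κ⁻¹ * ⟪DB (DB v₁ v₂) v₂ p, e₁⟫)) := by
      rw [show D v₁ (fun q => κ⁻¹ • DB w₂ v₂ q) p
            = dd (fun _ => κ⁻¹) v₁ p • DB w₂ v₂ p + κ⁻¹ • D v₁ (DB w₂ v₂) p
          from congrFun (hD_leib (fun _ => κ⁻¹) v₁ (DB w₂ v₂)) p,
          hDv₁DB, hDBDv₁w₂, hzR w₂ (D v₁ v₂) (hv₂D v₁), add_zero]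
      simp only [inner_add_left, real_inner_smul_left]
    have h₃ : ⟪D v₁ (fun q => κ⁻¹ • B q (D w₂ v₂ q)) p, e₁⟫ = 0 := by
      rw [show D v₁ (fun q => κ⁻¹ • B q (D w₂ v₂ q)) p
            = dd (fun _ => κ⁻¹) v₁ p • B p (D w₂ v₂ p)
              + κ⁻¹ • D v₁ (fun r => B r (D w₂ v₂ r)) p
          from congrFun (hD_leib (fun _ => κ⁻¹) v₁ (fun r => B r (D w₂ v₂ r))) p,
          hDexp v₁ (D w₂ v₂) p, hzR v₁ (D w₂ v₂) (hv₂D w₂), hv₂D w₂,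
          map_zero, smul_zero, zero_add, zero_add, real_inner_smul_left,
          hBperp, mul_zero]
    rw [h₁, h₂, h₃, add_zero]
  -- Term B
  have hBt : ⟪D w₂ (D v₁ w₂) p, e₁⟫ =
      dd (fun _ => κ⁻¹) v₁ p * ⟪DB w₂ v₂ p, e₁⟫
      + (dd (fun _ => κ⁻¹) w₂ p * ⟪DB v₁ v₂ p, e₁⟫
         + κ⁻¹ * ⟪D2B w₂ v₁ v₂ p, e₁⟫) := by
    have hDw₂DB : D w₂ (DB v₁ v₂) p
        = D2B w₂ v₁ v₂ p + (DB (D w₂ v₁) v₂ p + DB v₁ (D w₂ v₂) p) := by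
      have h := congrFun (hD2B_def w₂ v₁ v₂) p
      simp only [Pi.sub_apply] at h
      rw [h]; abel
    rw [Edec v₁, hD_addR, hD_addR]
    simp only [Pi.add_apply, inner_add_left]
    have h₁ : ⟪D w₂ (fun q => dd (fun _ => κ⁻¹) v₁ q • B q (v₂ q)) p, e₁⟫
        = dd (fun _ => κ⁻¹) v₁ p * ⟪DB w₂ v₂ p, e₁⟫ := by
      rw [show D w₂ (fun q => dd (fun _ => κ⁻¹) v₁ q • B q (v₂ q)) p
            = dd (dd (fun _ => κ⁻¹) v₁) w₂ p • B p (v₂ p)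
              + dd (fun _ => κ⁻¹) v₁ p • D w₂ (fun r => B r (v₂ r)) p
          from congrFun (hD_leib (dd (fun _ => κ⁻¹) v₁) w₂ (fun r => B r (v₂ r))) p,
          hv₂p, hBe₂, hDFp w₂]
      simp [inner_add_left, real_inner_smul_left, he12]
    have h₂ : ⟪D w₂ (fun q => κ⁻¹ • DB v₁ v₂ q) p, e₁⟫
        = dd (fun _ => κ⁻¹) w₂ p * ⟪DB v₁ v₂ p, e₁⟫
          + κ⁻¹ * ⟪D2B w₂ v₁ v₂ p, e₁⟫ := by
      rw [show D w₂ (fun q => κ⁻¹ • DB v₁ v₂ q) p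
            = dd (fun _ => κ⁻¹) w₂ p • DB v₁ v₂ p + κ⁻¹ • D w₂ (DB v₁ v₂) p
          from congrFun (hD_leib (fun _ => κ⁻¹) w₂ (DB v₁ v₂)) p,
          hDw₂DB, hzL (D w₂ v₁) v₂ (hv₁D w₂), hzR v₁ (D w₂ v₂) (hv₂D w₂)]
      simp only [add_zero, inner_add_left, real_inner_smul_left]
    have h₃ : ⟪D w₂ (fun q => κ⁻¹ • B q (D v₁ v₂ q)) p, e₁⟫ = 0 := by
      rw [show D w₂ (fun q => κ⁻¹ • B q (D v₁ v₂ q)) p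
            = dd (fun _ => κ⁻¹) w₂ p • B p (D v₁ v₂ p)
              + κ⁻¹ • D w₂ (fun r => B r (D v₁ v₂ r)) p
          from congrFun (hD_leib (fun _ => κ⁻¹) w₂ (fun r => B r (D v₁ v₂ r))) p,
          hDexp w₂ (D v₁ v₂) p, hzR w₂ (D v₁ v₂) (hv₂D v₁), hv₂D v₁,
          map_zero, smul_zero, zero_add, zero_add, real_inner_smul_left,
          hBperp, mul_zero]
    rw [h₁, h₂, h₃, add_zero]
  -- Term C
  have hCt : ⟪D (D v₁ w₂ - D w₂ v₁) w₂ p, e₁⟫ =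
      dd (fun _ => κ⁻¹) v₁ p * (κ⁻¹ * ⟪DB (fun r => B r (v₂ r)) v₂ p, e₁⟫)
      + κ⁻¹ * (κ⁻¹ * ⟪DB (DB v₁ v₂) v₂ p, e₁⟫) := by
    rw [hD_subL, Edec v₁, hD_addL, hD_addL]
    simp only [Pi.sub_apply, Pi.add_apply, inner_sub_left, inner_add_left]
    have h₁ : ⟪D (fun q => dd (fun _ => κ⁻¹) v₁ q • B q (v₂ q)) w₂ p, e₁⟫
        = dd (fun _ => κ⁻¹) v₁ p * (κ⁻¹ * ⟪DB (fun r => B r (v₂ r)) v₂ p, e₁⟫) := by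
      rw [show D (fun q => dd (fun _ => κ⁻¹) v₁ q • B q (v₂ q)) w₂ p
            = dd (fun _ => κ⁻¹) v₁ p • D (fun r => B r (v₂ r)) w₂ p
          from congrFun (hD_tens (dd (fun _ => κ⁻¹) v₁) (fun r => B r (v₂ r)) w₂) p,
          real_inner_smul_left, hiDw₂]
    have h₂ : ⟪D (fun q => κ⁻¹ • DB v₁ v₂ q) w₂ p, e₁⟫
        = κ⁻¹ * (κ⁻¹ * ⟪DB (DB v₁ v₂) v₂ p, e₁⟫) := by
      rw [show D (fun q => κ⁻¹ • DB v₁ v₂ q) w₂ p = κ⁻¹ • D (DB v₁ v₂) w₂ p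
          from congrFun (hD_tens (fun _ => κ⁻¹) (DB v₁ v₂) w₂) p,
          real_inner_smul_left, hiDw₂]
    have h₃ : ⟪D (fun q => κ⁻¹ • B q (D v₁ v₂ q)) w₂ p, e₁⟫ = 0 := by
      rw [show D (fun q => κ⁻¹ • B q (D v₁ v₂ q)) w₂ p
            = κ⁻¹ • D (fun r => B r (D v₁ v₂ r)) w₂ p
          from congrFun (hD_tens (fun _ => κ⁻¹) (fun r => B r (D v₁ v₂ r)) w₂) p,
          real_inner_smul_left, hiDw₂,
          hzL (fun r => B r (D v₁ v₂ r)) v₂ (by simp [hv₂D v₁]),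
          inner_zero_left, mul_zero, mul_zero]
    have h₄ : ⟪D (D w₂ v₁) w₂ p, e₁⟫ = 0 := by
      rw [hiDw₂, hzL (D w₂ v₁) v₂ (hv₁D w₂), inner_zero_left, mul_zero]
    rw [h₁, h₂, h₃, h₄, add_zero, sub_zero]
  -- exact value of K
  have hKval : K = κ⁻¹ * ⟪D2B v₁ w₂ v₂ p, e₁⟫ - κ⁻¹ * ⟪D2B w₂ v₁ v₂ p, e₁⟫ := by
    rw [hKeq, inner_sub_left, inner_sub_left, hA, hBt, hCt]
    ring
  -- bounds
  have hb₁ : ‖D2B v₁ w₂ v₂ p‖ ≤ ε := by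
    have h := hD2B_bd v₁ w₂ v₂ p
    rw [hv₁p, hv₂p, hw₂p, he₁, he₂] at h
    simpa using h
  have hb₂ : ‖D2B w₂ v₁ v₂ p‖ ≤ ε := by
    have h := hD2B_bd w₂ v₁ v₂ p
    rw [hv₁p, hv₂p, hw₂p, he₁, he₂] at h
    simpa using h
  have hi₁ : |⟪D2B v₁ w₂ v₂ p, e₁⟫| ≤ ε := by
    refine le_trans ?_ hb₁
    simpa [he₁] using abs_real_inner_le_norm (D2B v₁ w₂ v₂ p) e₁
  have hi₂ : |⟪D2B w₂ v₁ v₂ p, e₁⟫| ≤ ε := by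
    refine le_trans ?_ hb₂
    simpa [he₁] using abs_real_inner_le_norm (D2B w₂ v₁ v₂ p) e₁
  have hKb : |K| ≤ |κ|⁻¹ * (ε + ε) := by
    rw [hKval, ← mul_sub, abs_mul, abs_inv]
    refine mul_le_mul_of_nonneg_left ?_ (inv_nonneg.mpr (abs_nonneg κ))
    exact (abs_sub _ _).trans (add_le_add hi₁ hi₂)
  refine hKb.trans ?_
  have h0 : 0 ≤ 2 * ε * (1 / κ ^ 2) := by positivity
  have h1 : |κ|⁻¹ * (ε + ε) = 2 * ε * (1 / |κ|) := by ring
  rw [h1, mul_add]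
  linarith
end
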